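/- arXiv:nlin/0110004 — 12 statements merged into one kernel-verified Lean document; each statement's English description precedes it below -/
import Mathlib

section
/- Zero curvature representation of the cross-ratio equation: let z0, z1, z2, z3, α1, α2, λ ∈ ℂ with z0 ≠ z1, z1 ≠ z2, z2 ≠ z3, z3 ≠ z0 and α2 ≠ 0. Define the 2×2 complex matrix L(z, w, α, λ) := [[1, w − z], [λα/(w − z), 1]] (for w ≠ z). If ((z0 − z1)(z2 − z3))/((z1 − z2)(z3 − z0)) = α1/α2, then L(z2, z1, α2, λ) · L(z1, z0, α1, λ) = L(z2, z3, α1, λ) · L(z3, z0, α2, λ). -/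
open Matrix

/-- Transition matrix of the cross-ratio system. -/
noncomputable def crL (z w α lam : ℂ) : Matrix (Fin 2) (Fin 2) ℂ :=
  !![1, w - z; lam * α / (w - z), 1]

theorem cross_ratio_zero_curvature
    (z0 z1 z2 z3 α1 α2 lam : ℂ)
    (h01 : z0 ≠ z1) (h12 : z1 ≠ z2) (h23 : z2 ≠ z3) (h30 : z3 ≠ z0)
    (hα2 : α2 ≠ 0)
    (hcr : (z0 - z1) * (z2 - z3) / ((z1 - z2) * (z3 - z0)) = α1 / α2) :
    crL z2 z1 α2 lam * crL z1 z0 α1 lam =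
      crL z2 z3 α1 lam * crL z3 z0 α2 lam := by
  have ha : z0 - z1 ≠ 0 := sub_ne_zero.mpr h01
  have hb : z1 - z2 ≠ 0 := sub_ne_zero.mpr h12
  have hc : z3 - z2 ≠ 0 := sub_ne_zero.mpr h23.symm
  have hd : z0 - z3 ≠ 0 := sub_ne_zero.mpr h30.symm
  have hbd : (z1 - z2) * (z3 - z0) ≠ 0 :=
    mul_ne_zero hb (fun h => hd (by linear_combination -h))
  have hcr' : (z0 - z1) * (z2 - z3) * α2 = α1 * ((z1 - z2) * (z3 - z0)) :=
    (div_eq_div_iff hbd hα2).mp hcr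
  ext i j
  fin_cases i <;> fin_cases j <;>
    simp [crL, Matrix.mul_apply, Fin.sum_univ_two] <;>
    field_simp
  · linear_combination lam * hcr'
  · linear_combination lam * (z1 + z3 - z0 - z2) * hcr'
  · linear_combination -lam * hcr'
end

section
/- Three-leg form of the cross-ratio equation: let z0, z1, z2, z3, α1, α2 ∈ ℂ with z0 ≠ z1, z0 ≠ z2, z0 ≠ z3, z1 ≠ z2, z2 ≠ z3, α1 ≠ α2, α1 ≠ 0 and α2 ≠ 0. Then ((z0 − z1)(z2 − z3))/((z1 − z2)(z3 − z0)) = α1/α2 holds if and only if α1/(z0 − z1) − α2/(z0 − z3) = (α1 − α2)/(z0 − z2). -/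
theorem cross_ratio_three_leg_form
    (z0 z1 z2 z3 α1 α2 : ℂ)
    (h01 : z0 ≠ z1) (h02 : z0 ≠ z2) (h03 : z0 ≠ z3)
    (h12 : z1 ≠ z2) (h23 : z2 ≠ z3)
    (hα : α1 ≠ α2) (hα1 : α1 ≠ 0) (hα2 : α2 ≠ 0) :
    (z0 - z1) * (z2 - z3) / ((z1 - z2) * (z3 - z0)) = α1 / α2 ↔
      α1 / (z0 - z1) - α2 / (z0 - z3) = (α1 - α2) / (z0 - z2) := by
  have h01' : z0 - z1 ≠ 0 := sub_ne_zero.2 h01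
  have h02' : z0 - z2 ≠ 0 := sub_ne_zero.2 h02
  have h03' : z0 - z3 ≠ 0 := sub_ne_zero.2 h03
  have h12' : z1 - z2 ≠ 0 := sub_ne_zero.2 h12
  have h23' : z2 - z3 ≠ 0 := sub_ne_zero.2 h23
  have h30' : z3 - z0 ≠ 0 := fun h => h03 (by linear_combination -h)
  rw [div_eq_div_iff (by exact mul_ne_zero h12' h30') hα2,
    div_sub_div _ _ h01' h03', div_eq_div_iff (mul_ne_zero h01' h03') h02']
  constructor <;> intro h <;> [skip; skip] <;>
    · field_simp at h ⊢
      ring_nf at h ⊢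
      linear_combination h
end

section
/- Transition matrix for the additive rational Toda system: let z0, a, b, c, α, β, λ ∈ ℂ with z0 ≠ a, z0 ≠ b, z0 ≠ c. Define the 2×2 complex matrix L̃(z1, w, γ, λ) := [[1 + λγ·z1/(w − z1), −λγ·w·z1/(w − z1)], [λγ/(w − z1), 1 − λγ·w/(w − z1)]]. If β/(z0 − c) − α/(z0 − a) = (β − α)/(z0 − b), then L̃(c, z0, β, λ) · L̃(z0, a, α, λ) = I + (λ/(z0 − b)) · [[β·b − α·z0, (α − β)·z0·b], [β − α, α·b − β·z0]], where I is the 2×2 identity matrix; in particular this product depends only on z0, b, α, β, λ. -/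
/-!
Each factor is a rank-one perturbation of the identity,
`L̃(z₁, w, γ, λ) = I + λγ/(w - z₁) · (z₁, 1)ᵀ (1, -w)`. In the product
`L̃(c, z₀, β, λ) · L̃(z₀, a, α, λ)` the inner vectors `(1, -z₀)` and `(z₀, 1)` are orthogonal, so
the quadratic term vanishes and the product is `I` plus the sum of the two rank-one terms.
Clearing denominators, the three-leg equation reads `β (z₀ - a)(c - b) = α (z₀ - c)(a - b)`,
and with it the four entries of that sum recombine over the single denominator `z₀ - b`.
-/

open Matrix

noncomputable def crLt (z1 w γ lam : ℂ) : Matrix (Fin 2) (Fin 2) ℂ :=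
  !![1 + lam * γ * z1 / (w - z1), -(lam * γ * w * z1) / (w - z1);
     lam * γ / (w - z1), 1 - lam * γ * w / (w - z1)]

theorem one_add_smul_vecMulVec_mul_one_add_smul_vecMulVec {R n : Type*} [CommRing R]
    [Fintype n] [DecidableEq n] (p q : R) (x y x' y' : n → R) (h : y ⬝ᵥ x' = 0) :
    (1 + p • vecMulVec x y) * (1 + q • vecMulVec x' y') =
      1 + p • vecMulVec x y + q • vecMulVec x' y' := by
  simp only [add_mul, mul_add, one_mul, mul_one, smul_mul_smul_comm, vecMulVec_mul_vecMulVec, h,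
    zero_smul, vecMulVec_zero, smul_zero, add_zero]

theorem crLt_eq_one_add_smul_vecMulVec (z1 w γ lam : ℂ) :
    crLt z1 w γ lam = 1 + (lam * γ / (w - z1)) • vecMulVec ![z1, 1] ![1, -w] := by
  ext i j
  fin_cases i <;> fin_cases j <;> simp [crLt, one_apply] <;> ring

theorem crLt_mul_crLt (c z0 a β α lam : ℂ) :
    crLt c z0 β lam * crLt z0 a α lam =
      1 + (lam * β / (z0 - c)) • vecMulVec ![c, 1] ![1, -z0] +
        (lam * α / (a - z0)) • vecMulVec ![z0, 1] ![1, -a] := by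
  rw [crLt_eq_one_add_smul_vecMulVec, crLt_eq_one_add_smul_vecMulVec,
    one_add_smul_vecMulVec_mul_one_add_smul_vecMulVec]
  simp [dotProduct]

section ThreeLeg

variable {z0 a b c α β : ℂ}

theorem three_leg_mul_eq (ha : z0 ≠ a) (hb : z0 ≠ b) (hc : z0 ≠ c)
    (h3leg : β / (z0 - c) - α / (z0 - a) = (β - α) / (z0 - b)) :
    β * (z0 - a) * (c - b) = α * (z0 - c) * (a - b) := by
  have ha' : z0 - a ≠ 0 := sub_ne_zero.mpr ha
  have hb' : z0 - b ≠ 0 := sub_ne_zero.mpr hb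
  have hc' : z0 - c ≠ 0 := sub_ne_zero.mpr hc
  field_simp at h3leg
  linear_combination h3leg

theorem smul_vecMulVec_add_smul_vecMulVec_of_three_leg (lam : ℂ) (ha : z0 ≠ a) (hb : z0 ≠ b)
    (hc : z0 ≠ c) (h3leg : β / (z0 - c) - α / (z0 - a) = (β - α) / (z0 - b)) :
    (lam * β / (z0 - c)) • vecMulVec ![c, 1] ![1, -z0] +
        (lam * α / (a - z0)) • vecMulVec ![z0, 1] ![1, -a] =
      (lam / (z0 - b)) • !![β * b - α * z0, (α - β) * z0 * b; β - α, α * b - β * z0] := by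
  have key := three_leg_mul_eq ha hb hc h3leg
  have ha' : a - z0 ≠ 0 := sub_ne_zero.mpr ha.symm
  have hb' : z0 - b ≠ 0 := sub_ne_zero.mpr hb
  have hc' : z0 - c ≠ 0 := sub_ne_zero.mpr hc
  ext i j
  fin_cases i <;> fin_cases j <;> simp <;> field_simp
  · linear_combination (-(lam * z0)) * key
  · linear_combination (lam * z0 ^ 2) * key
  · linear_combination (-lam) * key
  · linear_combination (lam * z0) * key

end ThreeLeg

theorem additive_rational_Toda_transition_matrix
    (z0 a b c α β lam : ℂ)
    (ha : z0 ≠ a) (hb : z0 ≠ b) (hc : z0 ≠ c)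
    (h3leg : β / (z0 - c) - α / (z0 - a) = (β - α) / (z0 - b)) :
    crLt c z0 β lam * crLt z0 a α lam =
      1 + (lam / (z0 - b)) •
        !![β * b - α * z0, (α - β) * z0 * b;
           β - α, α * b - β * z0] := by
  rw [crLt_mul_crLt, add_assoc,
    smul_vecMulVec_add_smul_vecMulVec_of_three_leg lam ha hb hc h3leg]
end

section
/- Restriction of cross-ratio solutions to the black vertices solves the additive rational Toda system: let n ≥ 1, z0 ∈ ℂ, z1, …, z_{2n} ∈ ℂ with the cyclic convention z_{2n+1} = z1, and α1, …, αn ∈ ℂ \ {0} with the cyclic convention α_{n+1} = α1. Assume z0 ≠ z_j for all j and z_{2k−1} ≠ z_{2k}, z_{2k} ≠ z_{2k+1} for all k, and α_k ≠ α_{k+1} for all k. If for every k = 1, …, n the cross-ratio equation q(z0, z_{2k−1}, z_{2k}, z_{2k+1}) = α_k/α_{k+1} holds, then Σ_{k=1}^{n} (α_k − α_{k+1})/(z0 − z_{2k}) = 0. -/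
/-- Cross-ratio of four complex numbers. -/
noncomputable def crq (a b c d : ℂ) : ℂ :=
  (a - b) * (c - d) / ((b - c) * (d - a))

lemma three_leg (z0 a b c α β : ℂ) (hβ : β ≠ 0)
    (h0a : z0 ≠ a) (h0b : z0 ≠ b) (h0c : z0 ≠ c)
    (hab : a ≠ b) (hbc : b ≠ c)
    (hcr : crq z0 a b c = α / β) :
    (α - β) / (z0 - b) = α / (z0 - a) - β / (z0 - c) := by
  have h0a' : z0 - a ≠ 0 := sub_ne_zero.mpr h0a
  have h0b' : z0 - b ≠ 0 := sub_ne_zero.mpr h0b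
  have h0c' : z0 - c ≠ 0 := sub_ne_zero.mpr h0c
  have hab' : a - b ≠ 0 := sub_ne_zero.mpr hab
  have hc0' : c - z0 ≠ 0 := fun h => h0c (by linear_combination -h)
  unfold crq at hcr
  field_simp at hcr ⊢
  first
  | (linear_combination (z0 - b) * hcr)
  | (linear_combination (b - z0) * hcr)
  | (linear_combination hcr)
  | (linear_combination -hcr)

lemma telescope_Icc (n : ℕ) (f : ℕ → ℂ) :
    ∑ k ∈ Finset.Icc 1 n, (f k - f (k + 1)) = f 1 - f (n + 1) := by
  rw [← Finset.Ico_add_one_right_eq_Icc, Finset.sum_Ico_eq_sum_range]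
  have h : ∀ i ∈ Finset.range (n + 1 - 1), f (1 + i) - f (1 + i + 1) =
      (fun i => f (i + 1)) i - (fun i => f (i + 1)) (i + 1) := by
    intro i _; simp [Nat.add_comm]
  rw [Finset.sum_congr rfl h, Finset.sum_range_sub' (fun i => f (i + 1))]
  simp

theorem cross_ratio_restricts_to_additive_rational_Toda
    (n : ℕ) (hn : 1 ≤ n) (z0 : ℂ) (z : ℕ → ℂ) (α : ℕ → ℂ)
    (hzcyc : z (2 * n + 1) = z 1)
    (hαcyc : α (n + 1) = α 1)
    (hα0 : ∀ k, 1 ≤ k → k ≤ n → α k ≠ 0)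
    (hz0 : ∀ j, 1 ≤ j → j ≤ 2 * n → z0 ≠ z j)
    (hodd : ∀ k, 1 ≤ k → k ≤ n → z (2 * k - 1) ≠ z (2 * k))
    (heven : ∀ k, 1 ≤ k → k ≤ n → z (2 * k) ≠ z (2 * k + 1))
    (hαne : ∀ k, 1 ≤ k → k ≤ n → α k ≠ α (k + 1))
    (hcr : ∀ k, 1 ≤ k → k ≤ n →
      crq z0 (z (2 * k - 1)) (z (2 * k)) (z (2 * k + 1)) = α k / α (k + 1)) :
    ∑ k ∈ Finset.Icc 1 n, (α k - α (k + 1)) / (z0 - z (2 * k)) = 0 := by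
  set f : ℕ → ℂ := fun k => α k / (z0 - z (2 * k - 1)) with hf
  have key : ∀ k ∈ Finset.Icc 1 n,
      (α k - α (k + 1)) / (z0 - z (2 * k)) = f k - f (k + 1) := by
    intro k hk
    rw [Finset.mem_Icc] at hk
    obtain ⟨hk1, hkn⟩ := hk
    have hβ : α (k + 1) ≠ 0 := by
      rcases eq_or_lt_of_le hkn with h | h
      · subst h; rw [hαcyc]; exact hα0 1 le_rfl hn
      · exact hα0 (k + 1) (by omega) h
    have h0a : z0 ≠ z (2 * k - 1) := hz0 _ (by omega) (by omega)
    have h0b : z0 ≠ z (2 * k) := hz0 _ (by omega) (by omega)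
    have h0c : z0 ≠ z (2 * k + 1) := by
      rcases eq_or_lt_of_le hkn with h | h
      · subst h; rw [hzcyc]; exact hz0 1 le_rfl (by omega)
      · exact hz0 _ (by omega) (by omega)
    have h1 : (α k - α (k + 1)) / (z0 - z (2 * k)) =
        α k / (z0 - z (2 * k - 1)) - α (k + 1) / (z0 - z (2 * k + 1)) :=
      three_leg z0 _ _ _ _ _ hβ h0a h0b h0c (hodd k hk1 hkn) (heven k hk1 hkn)
        (hcr k hk1 hkn)
    rw [h1, hf]
    have h2 : 2 * (k + 1) - 1 = 2 * k + 1 := by omega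
    simp only [h2]
  rw [Finset.sum_congr rfl key, telescope_Icc]
  have h2n1 : 2 * (n + 1) - 1 = 2 * n + 1 := by omega
  simp [hf, h2n1, hzcyc, hαcyc]
end

section
/- Exactness of the dual form of the cross-ratio equation: let z0, z1, z2, z3, α1, α2 ∈ ℂ with z0 ≠ z1, z1 ≠ z2, z2 ≠ z3, z3 ≠ z0 and α2 ≠ 0. If ((z0 − z1)(z2 − z3))/((z1 − z2)(z3 − z0)) = α1/α2, then α1/(z0 − z1) + α2/(z1 − z2) + α1/(z2 − z3) + α2/(z3 − z0) = 0. -/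
theorem cross_ratio_dual_form_exactness
    (z0 z1 z2 z3 α1 α2 : ℂ)
    (h01 : z0 ≠ z1) (h12 : z1 ≠ z2) (h23 : z2 ≠ z3) (h30 : z3 ≠ z0)
    (hα2 : α2 ≠ 0)
    (hcr : (z0 - z1) * (z2 - z3) / ((z1 - z2) * (z3 - z0)) = α1 / α2) :
    α1 / (z0 - z1) + α2 / (z1 - z2) + α1 / (z2 - z3) + α2 / (z3 - z0) = 0 := by
  have d01 : z0 - z1 ≠ 0 := sub_ne_zero.mpr h01
  have d12 : z1 - z2 ≠ 0 := sub_ne_zero.mpr h12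
  have d23 : z2 - z3 ≠ 0 := sub_ne_zero.mpr h23
  have d30 : z3 - z0 ≠ 0 := sub_ne_zero.mpr h30
  have key : (z0 - z1) * (z2 - z3) * α2 = α1 * ((z1 - z2) * (z3 - z0)) := by
    field_simp at hcr
    linear_combination hcr
  field_simp
  linear_combination (z1 - z2 + z3 - z0) * key
end

section
/- Duality for the cross-ratio system: let z0, z1, z2, z3, α1, α2 ∈ ℂ with z0 ≠ z1, z1 ≠ z2, z2 ≠ z3, z3 ≠ z0, α1 ≠ 0 and α2 ≠ 0, and suppose ((z0 − z1)(z2 − z3))/((z1 − z2)(z3 − z0)) = α1/α2. Let Z0 ∈ ℂ be arbitrary and set Z1 := Z0 + α1/(z0 − z1), Z2 := Z1 + α2/(z1 − z2), Z3 := Z2 + α1/(z2 − z3). Then Z0 − Z3 = α2/(z3 − z0), and the dual quadruple satisfies the same cross-ratio equation: ((Z0 − Z1)(Z2 − Z3))/((Z1 − Z2)(Z3 − Z0)) = α1/α2. -/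
/-!
Write `a, b, c, d` for the edges `z0 - z1, z1 - z2, z2 - z3, z3 - z0` of the quadrilateral, so
`a + b + c + d = 0` and the cross-ratio equation reads `α₂ a c = α₁ b d`. The dual edges are
`α₁/a, α₂/b, α₁/c, α₂/d` up to sign. Their sum is `(a + c) (α₁ b d - α₂ a c) / (a b c d) = 0`, so the
dual quadrilateral closes up, and their cross-ratio is `α₁² b d / (α₂² a c) = α₁ / α₂`.
-/

section DualEdges

variable {K : Type*} [Field K] {a b c d α₁ α₂ : K}

theorem dual_edges_sum_eq_zero (ha : a ≠ 0) (hb : b ≠ 0) (hc : c ≠ 0) (hd : d ≠ 0)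
    (hsum : a + b + c + d = 0) (hcr : a * c * α₂ = α₁ * (b * d)) :
    α₁ / a + α₂ / b + α₁ / c + α₂ / d = 0 := by
  field_simp
  linear_combination -(a + c) * hcr + α₂ * a * c * hsum

theorem dual_edges_cross_ratio (ha : a ≠ 0) (hc : c ≠ 0) (hα₂ : α₂ ≠ 0)
    (hcr : a * c * α₂ = α₁ * (b * d)) :
    α₁ / a * (α₁ / c) / (α₂ / b * (α₂ / d)) = α₁ / α₂ := by
  field_simp
  linear_combination -α₁ * hcr

end DualEdges

theorem cross_ratio_duality_general
    (z0 z1 z2 z3 α1 α2 : ℂ)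
    (h01 : z0 ≠ z1) (h12 : z1 ≠ z2) (h23 : z2 ≠ z3) (h30 : z3 ≠ z0)
    (hα2 : α2 ≠ 0)
    (hcr : (z0 - z1) * (z2 - z3) / ((z1 - z2) * (z3 - z0)) = α1 / α2)
    (Z0 Z1 Z2 Z3 : ℂ)
    (hZ1 : Z1 = Z0 + α1 / (z0 - z1))
    (hZ2 : Z2 = Z1 + α2 / (z1 - z2))
    (hZ3 : Z3 = Z2 + α1 / (z2 - z3)) :
    Z0 - Z3 = α2 / (z3 - z0) ∧
      (Z0 - Z1) * (Z2 - Z3) / ((Z1 - Z2) * (Z3 - Z0)) = α1 / α2 := by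
  have ha : z0 - z1 ≠ 0 := sub_ne_zero.mpr h01
  have hb : z1 - z2 ≠ 0 := sub_ne_zero.mpr h12
  have hc : z2 - z3 ≠ 0 := sub_ne_zero.mpr h23
  have hd : z3 - z0 ≠ 0 := sub_ne_zero.mpr h30
  have hsum : (z0 - z1) + (z1 - z2) + (z2 - z3) + (z3 - z0) = 0 := by ring
  have hcr' := (div_eq_div_iff (mul_ne_zero hb hd) hα2).mp hcr
  have hclose : Z0 - Z3 = α2 / (z3 - z0) := by
    rw [hZ3, hZ2, hZ1]
    linear_combination -dual_edges_sum_eq_zero ha hb hc hd hsum hcr'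
  refine ⟨hclose, ?_⟩
  have e30 : Z3 - Z0 = -(α2 / (z3 - z0)) := by rw [← neg_sub, hclose]
  rw [show Z0 - Z1 = -(α1 / (z0 - z1)) by rw [hZ1]; ring,
    show Z1 - Z2 = -(α2 / (z1 - z2)) by rw [hZ2]; ring,
    show Z2 - Z3 = -(α1 / (z2 - z3)) by rw [hZ3]; ring, e30,
    neg_mul_neg, neg_mul_neg]
  exact dual_edges_cross_ratio ha hc hα2 hcr'

theorem cross_ratio_duality
    (z0 z1 z2 z3 α1 α2 : ℂ)
    (h01 : z0 ≠ z1) (h12 : z1 ≠ z2) (h23 : z2 ≠ z3) (h30 : z3 ≠ z0)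
    (hα1 : α1 ≠ 0) (hα2 : α2 ≠ 0)
    (hcr : (z0 - z1) * (z2 - z3) / ((z1 - z2) * (z3 - z0)) = α1 / α2)
    (Z0 Z1 Z2 Z3 : ℂ)
    (hZ1 : Z1 = Z0 + α1 / (z0 - z1))
    (hZ2 : Z2 = Z1 + α2 / (z1 - z2))
    (hZ3 : Z3 = Z2 + α1 / (z2 - z3)) :
    Z0 - Z3 = α2 / (z3 - z0) ∧
      (Z0 - Z1) * (Z2 - Z3) / ((Z1 - Z2) * (Z3 - Z0)) = α1 / α2 :=
  cross_ratio_duality_general z0 z1 z2 z3 α1 α2 h01 h12 h23 h30 hα2 hcr Z0 Z1 Z2 Z3 hZ1 hZ2 hZ3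
end

section
/- Cross-ratio of two intersecting circles (intersection points and centers): let z1, z3 ∈ ℂ with z1 ≠ z3 be the centers of two circles and let z0, z2 ∈ ℂ with z0 ≠ z2 be their two intersection points, i.e. |z0 − z1| = |z2 − z1| > 0 and |z0 − z3| = |z2 − z3| > 0. Then ((z0 − z1)(z2 − z3))/((z1 − z2)(z3 − z0)) = u / conj(u), where u := (z1 − z0) · conj(z3 − z0). In particular this cross-ratio has modulus 1 and equals exp(2iφ), where φ = arg u is the intersection angle of the two circles at z0. -/
/-!
Write `u = (z1 - z0) * conj (z3 - z0)`. A centre `w` equidistant from `z0` and `z2` satisfies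
`(z0 - w) * conj (z0 - w) = (z2 - w) * conj (z2 - w)`, an equation affine in `w` and `conj w`.
Combining the equations for `w = z1` and `w = z3` and cancelling `conj (z0 - z2)` gives
`(z2 - z3) * conj (z0 - z1) = (z2 - z1) * conj (z0 - z3)`, which after clearing denominators is
exactly `crossRatio z0 z1 z2 z3 = u / conj u`. Any `u ≠ 0` has `u / conj u = exp (2 i arg u)`.
-/

open Complex ComplexConjugate

lemma ne_of_norm_sub_eq_of_ne {E : Type*} [NormedAddCommGroup E] {p q w : E} (hpq : p ≠ q)
    (h : ‖p - w‖ = ‖q - w‖) : p ≠ w := by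
  rintro rfl
  rw [sub_self, norm_zero, eq_comm, norm_sub_eq_zero_iff] at h
  exact hpq h.symm

namespace Complex

lemma mul_conj_eq_of_norm_eq {a b : ℂ} (h : ‖a‖ = ‖b‖) : a * conj a = b * conj b := by
  rw [mul_conj', mul_conj', h]

lemma sub_mul_conj_sub_comm_of_equidistant {p q w₁ w₂ : ℂ} (hpq : p ≠ q)
    (h₁ : ‖p - w₁‖ = ‖q - w₁‖) (h₂ : ‖p - w₂‖ = ‖q - w₂‖) :
    (q - w₂) * conj (p - w₁) = (q - w₁) * conj (p - w₂) := by
  have e₁ := mul_conj_eq_of_norm_eq h₁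
  have e₂ := mul_conj_eq_of_norm_eq h₂
  apply mul_left_cancel₀ ((map_ne_zero conj).mpr (sub_ne_zero.mpr hpq))
  simp only [map_sub] at e₁ e₂ ⊢
  linear_combination (conj p - conj w₁) * e₂ - (conj p - conj w₂) * e₁

lemma div_conj_self_eq_exp_arg {w : ℂ} (hw : w ≠ 0) :
    w / conj w = exp (2 * I * arg w) := by
  have hr : (‖w‖ : ℂ) ≠ 0 := ofReal_ne_zero.mpr (norm_ne_zero_iff.mpr hw)
  conv_lhs => rw [← norm_mul_exp_arg_mul_I w]
  rw [map_mul, conj_ofReal, ← exp_conj, map_mul, conj_ofReal, conj_I,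
    mul_div_mul_left _ _ hr, ← exp_sub]
  ring_nf

lemma norm_div_conj_self {w : ℂ} (hw : w ≠ 0) : ‖w / conj w‖ = 1 := by
  rw [norm_div, norm_conj, div_self (norm_ne_zero_iff.mpr hw)]

end Complex

noncomputable def crossRatio (z0 z1 z2 z3 : ℂ) : ℂ :=
  (z0 - z1) * (z2 - z3) / ((z1 - z2) * (z3 - z0))

section IntersectingCircles

variable {z0 z1 z2 z3 : ℂ} (hi : z0 ≠ z2) (hr1 : ‖z0 - z1‖ = ‖z2 - z1‖)
  (hr3 : ‖z0 - z3‖ = ‖z2 - z3‖)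
include hi hr1 hr3

lemma sub_mul_conj_sub_ne_zero_of_equidistant : (z1 - z0) * conj (z3 - z0) ≠ 0 :=
  mul_ne_zero (sub_ne_zero.mpr (ne_of_norm_sub_eq_of_ne hi hr1).symm)
    ((map_ne_zero _).mpr (sub_ne_zero.mpr (ne_of_norm_sub_eq_of_ne hi hr3).symm))

lemma crossRatio_eq_div_conj_of_equidistant :
    crossRatio z0 z1 z2 z3 = (z1 - z0) * conj (z3 - z0) / conj ((z1 - z0) * conj (z3 - z0)) := by
  have h12 : z1 - z2 ≠ 0 := sub_ne_zero.mpr (ne_of_norm_sub_eq_of_ne hi.symm hr1.symm).symm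
  have h30 : z3 - z0 ≠ 0 := sub_ne_zero.mpr (ne_of_norm_sub_eq_of_ne hi hr3).symm
  have hu := sub_mul_conj_sub_ne_zero_of_equidistant hi hr1 hr3
  have key := sub_mul_conj_sub_comm_of_equidistant hi hr1 hr3
  rw [crossRatio, div_eq_div_iff (mul_ne_zero h12 h30) ((map_ne_zero _).mpr hu)]
  simp only [map_sub, map_mul, conj_conj] at key ⊢
  linear_combination (z0 - z1) * (z0 - z3) * key

end IntersectingCircles

theorem cross_ratio_of_two_intersecting_circles_general
    (z0 z1 z2 z3 : ℂ)
    (hi : z0 ≠ z2)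
    (hr1 : ‖z0 - z1‖ = ‖z2 - z1‖)
    (hr3 : ‖z0 - z3‖ = ‖z2 - z3‖) :
    (z0 - z1) * (z2 - z3) / ((z1 - z2) * (z3 - z0)) =
        (z1 - z0) * (starRingEnd ℂ) (z3 - z0) /
          (starRingEnd ℂ) ((z1 - z0) * (starRingEnd ℂ) (z3 - z0)) ∧
      ‖(z0 - z1) * (z2 - z3) / ((z1 - z2) * (z3 - z0))‖ = 1 ∧
      (z0 - z1) * (z2 - z3) / ((z1 - z2) * (z3 - z0)) =
        Complex.exp (2 * Complex.I *
          (Complex.arg ((z1 - z0) * (starRingEnd ℂ) (z3 - z0)) : ℂ)) := by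
  have hu := sub_mul_conj_sub_ne_zero_of_equidistant hi hr1 hr3
  have hq := crossRatio_eq_div_conj_of_equidistant hi hr1 hr3
  rw [crossRatio] at hq
  exact ⟨hq, hq ▸ norm_div_conj_self hu, hq ▸ div_conj_self_eq_exp_arg hu⟩

theorem cross_ratio_of_two_intersecting_circles
    (z0 z1 z2 z3 : ℂ)
    (hc : z1 ≠ z3) (hi : z0 ≠ z2)
    (hr1 : ‖z0 - z1‖ = ‖z2 - z1‖)
    (hr1pos : 0 < ‖z0 - z1‖)
    (hr3 : ‖z0 - z3‖ = ‖z2 - z3‖)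
    (hr3pos : 0 < ‖z0 - z3‖) :
    (z0 - z1) * (z2 - z3) / ((z1 - z2) * (z3 - z0)) =
        (z1 - z0) * (starRingEnd ℂ) (z3 - z0) /
          (starRingEnd ℂ) ((z1 - z0) * (starRingEnd ℂ) (z3 - z0)) ∧
      ‖(z0 - z1) * (z2 - z3) / ((z1 - z2) * (z3 - z0))‖ = 1 ∧
      (z0 - z1) * (z2 - z3) / ((z1 - z2) * (z3 - z0)) =
        Complex.exp (2 * Complex.I *
          (Complex.arg ((z1 - z0) * (starRingEnd ℂ) (z3 - z0)) : ℂ)) :=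
  cross_ratio_of_two_intersecting_circles_general z0 z1 z2 z3 hi hr1 hr3
end

section
/- Zero curvature representation of the discrete KdV equation: let w0, w1, w2, w3, α1, α2, μ ∈ ℂ with w2 ≠ w0, and define the 2×2 complex matrix L(w, v, α, μ) := [[v, −v·w + α − μ], [1, −w]]. If w1 − w3 = (α2 − α1)/(w2 − w0), then L(w2, w1, α2, μ) · L(w1, w0, α1, μ) = L(w2, w3, α1, μ) · L(w3, w0, α2, μ). -/
open Matrix

/-- Transition matrix of the discrete KdV equation. -/
noncomputable def kdvL (w v α μ : ℂ) : Matrix (Fin 2) (Fin 2) ℂ :=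
  !![v, -(v * w) + α - μ; 1, -w]

theorem discrete_KdV_zero_curvature
    (w0 w1 w2 w3 α1 α2 μ : ℂ)
    (h20 : w2 ≠ w0)
    (hkdv : w1 - w3 = (α2 - α1) / (w2 - w0)) :
    kdvL w2 w1 α2 μ * kdvL w1 w0 α1 μ =
      kdvL w2 w3 α1 μ * kdvL w3 w0 α2 μ := by
  have h : (w1 - w3) * (w2 - w0) = α2 - α1 := by
    rw [hkdv, div_mul_cancel₀ _ (sub_ne_zero.mpr h20)]
  unfold kdvL
  ext i j
  fin_cases i <;> fin_cases j <;>
      simp [Matrix.mul_apply, Fin.sum_univ_two]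
  · linear_combination -h
  · linear_combination (w1 + w3) * h
  · linear_combination h
end

section
/- Three-leg form of the shifted ratio equation: let z0, z1, z2, z3, α1, α2 ∈ ℂ with α1 ≠ 0, α2 ≠ 0, and assume z0 − z1 − α1 ≠ 0, z0 − z3 + α2 ≠ 0, z0 − z2 − α1 + α2 ≠ 0, z1 − z2 − α2 ≠ 0 and z3 − z0 − α2 ≠ 0. Then ((z0 − z1 + α1)/(z0 − z1 − α1)) · ((z0 − z3 − α2)/(z0 − z3 + α2)) = (z0 − z2 + α1 − α2)/(z0 − z2 − α1 + α2) holds if and only if ((z0 − z1 + α1)(z2 − z3 + α1))/((z1 − z2 − α2)(z3 − z0 − α2)) = α1/α2. -/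
theorem shifted_ratio_three_leg_form
    (z0 z1 z2 z3 α1 α2 : ℂ)
    (hα1 : α1 ≠ 0) (hα2 : α2 ≠ 0)
    (h1 : z0 - z1 - α1 ≠ 0) (h2 : z0 - z3 + α2 ≠ 0)
    (h3 : z0 - z2 - α1 + α2 ≠ 0)
    (h4 : z1 - z2 - α2 ≠ 0) (h5 : z3 - z0 - α2 ≠ 0) :
    ((z0 - z1 + α1) / (z0 - z1 - α1)) * ((z0 - z3 - α2) / (z0 - z3 + α2)) =
        (z0 - z2 + α1 - α2) / (z0 - z2 - α1 + α2) ↔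
      (z0 - z1 + α1) * (z2 - z3 + α1) / ((z1 - z2 - α2) * (z3 - z0 - α2)) =
        α1 / α2 := by
  rw [div_mul_div_comm, div_eq_div_iff (mul_ne_zero h1 h2) h3,
    div_eq_div_iff (mul_ne_zero h4 h5) hα2]
  constructor <;> intro h
  · linear_combination h / 2
  · linear_combination 2 * h
end

section
/- Zero curvature representation of the shifted ratio equation: let z0, z1, z2, z3, α1, α2, λ ∈ ℂ with α1 ≠ 0, α2 ≠ 0 and z0 − z1 ± α1, z1 − z2 ± α2, z2 − z3 ± α1, z3 − z0 ± α2 all nonzero. Define the 2×2 complex matrix L(z, w, α, λ) := [[1, w − z + α], [λα/(w − z − α), (w − z + α)/(w − z − α)]]. If ((z0 − z1 + α1)(z2 − z3 + α1))/((z1 − z2 − α2)(z3 − z0 − α2)) = α1/α2, then L(z2, z1, α2, λ) · L(z1, z0, α1, λ) = L(z2, z3, α1, λ) · L(z3, z0, α2, λ). -/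
open Matrix

/-- Transition matrix of the shifted ratio system. -/
noncomputable def srL (z w α lam : ℂ) : Matrix (Fin 2) (Fin 2) ℂ :=
  !![1, w - z + α;
     lam * α / (w - z - α), (w - z + α) / (w - z - α)]

/-! Clearing the denominator, `srL z w α lam = (w - z - α)⁻¹ • srLNum z w α lam` with a
polynomial matrix `srLNum`. The zero-curvature condition then becomes a polynomial identity
between the products of the `srLNum`s, each scaled by the denominators of the other side, and
each of its four entries is an explicit polynomial multiple of the cleared shifted ratio
equation `(z0 - z1 + α1) (z2 - z3 + α1) α2 = α1 (z1 - z2 - α2) (z3 - z0 - α2)`. -/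

section Polynomial

variable {R : Type*} [CommRing R]

def srLNum (z w α lam : R) : Matrix (Fin 2) (Fin 2) R :=
  !![w - z - α, (w - z + α) * (w - z - α);
     lam * α, w - z + α]

theorem srLNum_zero_curvature (z0 z1 z2 z3 α1 α2 lam : R)
    (hsr : (z0 - z1 + α1) * (z2 - z3 + α1) * α2 = α1 * ((z1 - z2 - α2) * (z3 - z0 - α2))) :
    ((z3 - z2 - α1) * (z0 - z3 - α2)) • (srLNum z2 z1 α2 lam * srLNum z1 z0 α1 lam) =
      ((z1 - z2 - α2) * (z0 - z1 - α1)) • (srLNum z2 z3 α1 lam * srLNum z3 z0 α2 lam) := by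
  ext i j
  fin_cases i <;> fin_cases j <;>
    simp only [srLNum, mul_fin_two, Matrix.smul_apply, of_apply, cons_val', cons_val_zero,
      cons_val_one, cons_val_fin_one, smul_eq_mul, Fin.zero_eta, Fin.mk_one]
  · linear_combination lam * (z1 - z2 - α2) * (z3 - z2 - α1) * hsr
  · linear_combination 2 * (z1 - z2 - α2) * (z3 - z2 - α1) * hsr
  · linear_combination lam * (z1 - z0 + z3 - z2) * hsr
  · linear_combination
      (2 * (z1 - z0 + z3 - z2) - lam * (z0 - z1 - α1) * (z0 - z3 - α2)) * hsr

end Polynomial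

theorem srL_eq_inv_smul_srLNum {z w α lam : ℂ} (h : w - z - α ≠ 0) :
    srL z w α lam = (w - z - α)⁻¹ • srLNum z w α lam := by
  ext i j
  fin_cases i <;> fin_cases j <;>
    simp only [srL, srLNum, Matrix.smul_apply, of_apply, cons_val', cons_val_zero, cons_val_one,
      cons_val_fin_one, smul_eq_mul, Fin.zero_eta, Fin.mk_one] <;>
    field_simp

theorem inv_smul_eq_inv_smul_of_smul_eq {G M : Type*} [CommGroupWithZero G] [MulAction G M]
    {a b : G} {x y : M} (ha : a ≠ 0) (hb : b ≠ 0) (h : b • x = a • y) :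
    a⁻¹ • x = b⁻¹ • y := by
  rw [inv_smul_eq_iff₀ ha, smul_comm, eq_inv_smul_iff₀ hb, h]

theorem shifted_ratio_zero_curvature_general
    (z0 z1 z2 z3 α1 α2 lam : ℂ)
    (hα2 : α2 ≠ 0)
    (h1m : z0 - z1 - α1 ≠ 0)
    (h2m : z1 - z2 - α2 ≠ 0)
    (h3p : z2 - z3 + α1 ≠ 0)
    (h4p : z3 - z0 + α2 ≠ 0) (h4m : z3 - z0 - α2 ≠ 0)
    (hsr : (z0 - z1 + α1) * (z2 - z3 + α1) /
        ((z1 - z2 - α2) * (z3 - z0 - α2)) = α1 / α2) :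
    srL z2 z1 α2 lam * srL z1 z0 α1 lam =
      srL z2 z3 α1 lam * srL z3 z0 α2 lam := by
  have h3 : z3 - z2 - α1 ≠ 0 := by contrapose! h3p; linear_combination -h3p
  have h4 : z0 - z3 - α2 ≠ 0 := by contrapose! h4p; linear_combination -h4p
  have hcleared := (div_eq_div_iff (mul_ne_zero h2m h4m) hα2).mp hsr
  rw [srL_eq_inv_smul_srLNum h2m, srL_eq_inv_smul_srLNum h1m, srL_eq_inv_smul_srLNum h3,
    srL_eq_inv_smul_srLNum h4, smul_mul_smul_comm, smul_mul_smul_comm, ← mul_inv, ← mul_inv]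
  exact inv_smul_eq_inv_smul_of_smul_eq (mul_ne_zero h2m h1m) (mul_ne_zero h3 h4)
    (srLNum_zero_curvature z0 z1 z2 z3 α1 α2 lam hcleared)

theorem shifted_ratio_zero_curvature
    (z0 z1 z2 z3 α1 α2 lam : ℂ)
    (hα1 : α1 ≠ 0) (hα2 : α2 ≠ 0)
    (h1p : z0 - z1 + α1 ≠ 0) (h1m : z0 - z1 - α1 ≠ 0)
    (h2p : z1 - z2 + α2 ≠ 0) (h2m : z1 - z2 - α2 ≠ 0)
    (h3p : z2 - z3 + α1 ≠ 0) (h3m : z2 - z3 - α1 ≠ 0)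
    (h4p : z3 - z0 + α2 ≠ 0) (h4m : z3 - z0 - α2 ≠ 0)
    (hsr : (z0 - z1 + α1) * (z2 - z3 + α1) /
        ((z1 - z2 - α2) * (z3 - z0 - α2)) = α1 / α2) :
    srL z2 z1 α2 lam * srL z1 z0 α1 lam =
      srL z2 z3 α1 lam * srL z3 z0 α2 lam :=
  shifted_ratio_zero_curvature_general z0 z1 z2 z3 α1 α2 lam hα2 h1m h2m h3p h4p h4m hsr
end

section
/- Duality for the shifted ratio system: let z0, z1, z2, z3, α1, α2 ∈ ℂ with α1 ≠ 0, α2 ≠ 0 and z0 − z1 ± α1, z1 − z2 ± α2, z2 − z3 ± α1, z3 − z0 ± α2 all nonzero, and suppose ((z0 − z1 + α1)(z2 − z3 + α1))/((z1 − z2 − α2)(z3 − z0 − α2)) = α1/α2. Let X0 ∈ ℂ \ {0} and set X1 := X0·(z0 − z1 + α1)/(z0 − z1 − α1), X2 := X1·(z1 − z2 + α2)/(z1 − z2 − α2), X3 := X2·(z2 − z3 + α1)/(z2 − z3 − α1). Then X0 = X3·(z3 − z0 + α2)/(z3 − z0 − α2), and the dual quadruple satisfies the cross-ratio equation ((X0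 − X1)(X2 − X3))/((X1 − X2)(X3 − X0)) = α1/α2. -/
/-!
Write `a, b, c, d` for the edge differences `z0 - z1, z1 - z2, z2 - z3, z3 - z0`, so that
`a + b + c + d = 0`, and `q(w, α) = (w + α) / (w - α)` for the edge multipliers of the dual solution.
Because the edge differences sum to zero, the polynomial form of the shifted ratio equation is
invariant under `(α1, α2) ↦ (-α1, -α2)`; multiplying it by its image shows that the four multipliers
have product one, so the dual solution closes up around the quadrilateral. Its cross ratio only
involves `(1 - q) / q = -2α / (w + α)` on the `α1`-edges and `1 - q = -2α / (w - α)` on the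
`α2`-edges, and the shifted ratio equation turns the resulting quotient into `α1 / α2`.
-/

section ShiftedRatio

variable {K : Type*} [Field K]

theorem shifted_ratio_neg {a b c d α β : K} (habcd : a + b + c + d = 0)
    (h : (a + α) * (c + α) * β = α * ((b - β) * (d - β))) :
    (a - α) * (c - α) * β = α * ((b + β) * (d + β)) := by
  linear_combination h - 2 * α * β * habcd

theorem shift_ratio_prod_eq_one {a b c d α β : K} (habcd : a + b + c + d = 0)
    (hα : α ≠ 0) (hβ : β ≠ 0) (ha : a - α ≠ 0) (hb : b - β ≠ 0) (hc : c - α ≠ 0)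
    (hd : d - β ≠ 0) (h : (a + α) * (c + α) * β = α * ((b - β) * (d - β))) :
    (a + α) / (a - α) * ((b + β) / (b - β)) * ((c + α) / (c - α)) * ((d + β) / (d - β)) = 1 := by
  have hneg := shifted_ratio_neg habcd h
  rw [div_mul_div_comm, div_mul_div_comm, div_mul_div_comm, div_eq_one_iff_eq (by positivity)]
  refine mul_left_cancel₀ (mul_ne_zero hα hβ) ?_
  linear_combination (α * ((b + β) * (d + β))) * h - (α * ((b - β) * (d - β))) * hneg

theorem one_sub_shift_ratio {w α : K} (hw : w - α ≠ 0) :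
    1 - (w + α) / (w - α) = -2 * α / (w - α) := by
  field_simp
  ring

theorem one_sub_shift_ratio_div {w α : K} (hw : w - α ≠ 0) (hw' : w + α ≠ 0) :
    (1 - (w + α) / (w - α)) / ((w + α) / (w - α)) = -2 * α / (w + α) := by
  field_simp
  ring

end ShiftedRatio

theorem cross_ratio_of_mul {K : Type*} [Field K] {X0 X1 X2 X3 p q r s : K} (hX0 : X0 ≠ 0)
    (h1 : X1 = X0 * p) (h2 : X2 = X1 * q) (h3 : X3 = X2 * r) (h0 : X0 = X3 * s) :
    (X0 - X1) * (X2 - X3) / ((X1 - X2) * (X3 - X0)) =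
      (1 - p) / p * ((1 - r) / r) / ((1 - q) * (1 - s)) := by
  subst h1 h2 h3
  have hprod : p * q * r * s = 1 := mul_left_cancel₀ hX0 (by linear_combination -h0)
  have hp : p ≠ 0 := fun hp => by simp [hp] at hprod
  have hq : q ≠ 0 := fun hq => by simp [hq] at hprod
  have hr : r ≠ 0 := fun hr => by simp [hr] at hprod
  rw [show X0 * p * q * r - X0 = X0 * p * q * r * (1 - s) by linear_combination -h0]
  field_simp

theorem shifted_ratio_duality_general
    (z0 z1 z2 z3 α1 α2 : ℂ)
    (hα1 : α1 ≠ 0) (hα2 : α2 ≠ 0)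
    (h1p : z0 - z1 + α1 ≠ 0) (h1m : z0 - z1 - α1 ≠ 0)
    (h2m : z1 - z2 - α2 ≠ 0)
    (h3p : z2 - z3 + α1 ≠ 0) (h3m : z2 - z3 - α1 ≠ 0)
    (h4m : z3 - z0 - α2 ≠ 0)
    (hsr : (z0 - z1 + α1) * (z2 - z3 + α1) /
        ((z1 - z2 - α2) * (z3 - z0 - α2)) = α1 / α2)
    (X0 X1 X2 X3 : ℂ) (hX0 : X0 ≠ 0)
    (hX1 : X1 = X0 * ((z0 - z1 + α1) / (z0 - z1 - α1)))
    (hX2 : X2 = X1 * ((z1 - z2 + α2) / (z1 - z2 - α2)))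
    (hX3 : X3 = X2 * ((z2 - z3 + α1) / (z2 - z3 - α1))) :
    X0 = X3 * ((z3 - z0 + α2) / (z3 - z0 - α2)) ∧
      (X0 - X1) * (X2 - X3) / ((X1 - X2) * (X3 - X0)) = α1 / α2 := by
  have hedges : (z0 - z1) + (z1 - z2) + (z2 - z3) + (z3 - z0) = 0 := by ring
  have hP : (z0 - z1 + α1) * (z2 - z3 + α1) * α2 = α1 * ((z1 - z2 - α2) * (z3 - z0 - α2)) :=
    (div_eq_div_iff (mul_ne_zero h2m h4m) hα2).1 hsr
  have hclose : X0 = X3 * ((z3 - z0 + α2) / (z3 - z0 - α2)) := by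
    rw [hX3, hX2, hX1]
    linear_combination (-X0) * shift_ratio_prod_eq_one hedges hα1 hα2 h1m h2m h3m h4m hP
  refine ⟨hclose, ?_⟩
  rw [cross_ratio_of_mul hX0 hX1 hX2 hX3 hclose, one_sub_shift_ratio_div h1m h1p,
    one_sub_shift_ratio_div h3m h3p, one_sub_shift_ratio h2m, one_sub_shift_ratio h4m]
  field_simp
  linear_combination -hP

theorem shifted_ratio_duality
    (z0 z1 z2 z3 α1 α2 : ℂ)
    (hα1 : α1 ≠ 0) (hα2 : α2 ≠ 0)
    (h1p : z0 - z1 + α1 ≠ 0) (h1m : z0 - z1 - α1 ≠ 0)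
    (h2p : z1 - z2 + α2 ≠ 0) (h2m : z1 - z2 - α2 ≠ 0)
    (h3p : z2 - z3 + α1 ≠ 0) (h3m : z2 - z3 - α1 ≠ 0)
    (h4p : z3 - z0 + α2 ≠ 0) (h4m : z3 - z0 - α2 ≠ 0)
    (hsr : (z0 - z1 + α1) * (z2 - z3 + α1) /
        ((z1 - z2 - α2) * (z3 - z0 - α2)) = α1 / α2)
    (X0 X1 X2 X3 : ℂ) (hX0 : X0 ≠ 0)
    (hX1 : X1 = X0 * ((z0 - z1 + α1) / (z0 - z1 - α1)))
    (hX2 : X2 = X1 * ((z1 - z2 + α2) / (z1 - z2 - α2)))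
    (hX3 : X3 = X2 * ((z2 - z3 + α1) / (z2 - z3 - α1))) :
    X0 = X3 * ((z3 - z0 + α2) / (z3 - z0 - α2)) ∧
      (X0 - X1) * (X2 - X3) / ((X1 - X2) * (X3 - X0)) = α1 / α2 :=
  shifted_ratio_duality_general z0 z1 z2 z3 α1 α2 hα1 hα2 h1p h1m h2m h3p h3m h4m hsr X0 X1 X2 X3
    hX0 hX1 hX2 hX3
end

section
/- Zero curvature representation of the hyperbolic shifted ratio equation: let x0, x1, x2, x3, c1, c2, λ ∈ ℂ with c1² ≠ 1, c2² ≠ 1 and all of c1·x0 − x1, x0 − c1·x1, c2·x1 − x2, x1 − c2·x2, c1·x2 − x3, x2 − c1·x3, c2·x3 − x0, x3 − c2·x0 nonzero. Define the 2×2 complex matrix L(x, w, c, λ) := [[1, w − c·x], [λ(1 − c²)/(c·w − x), (w − c·x)/(c·w − x)]]. If ((c1·x0 − x1)(c1·x2 − x3))/((x1 − c2·x2)(x3 − c2·x0)) = (1 − c1²)/(1 − c2²), then L(x2, x1, c2, λ) · L(x1, x0, c1, λ) = L(x2, x3, c1, λ) · L(x3, x0, c2, λ). -/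
open Matrix

/-- Transition matrix of the hyperbolic shifted ratio system. -/
noncomputable def hsrL (x w c lam : ℂ) : Matrix (Fin 2) (Fin 2) ℂ :=
  !![1, w - c * x;
     lam * (1 - c ^ 2) / (c * w - x), (w - c * x) / (c * w - x)]

def hsrLNum (x w c lam : ℂ) : Matrix (Fin 2) (Fin 2) ℂ :=
  !![c * w - x, (c * w - x) * (w - c * x);
     lam * (1 - c ^ 2), w - c * x]

theorem hsrL_eq_inv_smul_hsrLNum {x w c : ℂ} (lam : ℂ) (h : c * w - x ≠ 0) :
    hsrL x w c lam = (c * w - x)⁻¹ • hsrLNum x w c lam := by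
  simp only [hsrL, hsrLNum, smul_of, smul_cons, smul_empty, smul_eq_mul]
  congrm !![?_, ?_; ?_, ?_]
  · exact (inv_mul_cancel₀ h).symm
  · exact (inv_mul_cancel_left₀ h _).symm
  · exact div_eq_inv_mul _ _
  · exact div_eq_inv_mul _ _

theorem hsrL_mul_hsrL {x w v c d : ℂ} (lam : ℂ) (hxw : c * w - x ≠ 0) (hwv : d * v - w ≠ 0) :
    hsrL x w c lam * hsrL w v d lam =
      ((c * w - x) * (d * v - w))⁻¹ • (hsrLNum x w c lam * hsrLNum w v d lam) := by
  rw [hsrL_eq_inv_smul_hsrLNum lam hxw, hsrL_eq_inv_smul_hsrLNum lam hwv, smul_mul_smul_comm,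
    mul_inv]

theorem hsrLNum_zero_curvature {x0 x1 x2 x3 c1 c2 : ℂ} (lam : ℂ)
    (h : (1 - c1 ^ 2) * (x1 - c2 * x2) * (c2 * x0 - x3) =
      (1 - c2 ^ 2) * (x3 - c1 * x2) * (c1 * x0 - x1)) :
    ((c1 * x3 - x2) * (c2 * x0 - x3)) • (hsrLNum x2 x1 c2 lam * hsrLNum x1 x0 c1 lam) =
      ((c2 * x1 - x2) * (c1 * x0 - x1)) • (hsrLNum x2 x3 c1 lam * hsrLNum x3 x0 c2 lam) := by
  simp only [hsrLNum, mul_fin_two, smul_of, smul_cons, smul_empty, smul_eq_mul]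
  congrm !![?_, ?_; ?_, ?_]
  · linear_combination lam * (c2 * x1 - x2) * (c1 * x3 - x2) * h
  · linear_combination x0 * (c2 * x1 - x2) * (c1 * x3 - x2) * h
  · linear_combination lam * (c1 * x3 + c2 * x1 - x2 - c1 * c2 * x0) * h
  · linear_combination (x1 * x3 - x0 * x2 - lam * (c1 * x0 - x1) * (c2 * x0 - x3)) * h

theorem hyperbolic_shifted_ratio_zero_curvature_general
    (x0 x1 x2 x3 c1 c2 lam : ℂ)
    (hc2 : c2 ^ 2 ≠ 1)
    (h1 : c1 * x0 - x1 ≠ 0)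
    (h3 : c2 * x1 - x2 ≠ 0) (h4 : x1 - c2 * x2 ≠ 0)
    (h6 : x2 - c1 * x3 ≠ 0)
    (h8 : x3 - c2 * x0 ≠ 0)
    (hhsr : (c1 * x0 - x1) * (c1 * x2 - x3) /
        ((x1 - c2 * x2) * (x3 - c2 * x0)) = (1 - c1 ^ 2) / (1 - c2 ^ 2)) :
    hsrL x2 x1 c2 lam * hsrL x1 x0 c1 lam =
      hsrL x2 x3 c1 lam * hsrL x3 x0 c2 lam := by
  have h23 : c1 * x3 - x2 ≠ 0 := sub_ne_zero.2 (sub_ne_zero.1 h6).symm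
  have h30 : c2 * x0 - x3 ≠ 0 := sub_ne_zero.2 (sub_ne_zero.1 h8).symm
  have hcross : (1 - c1 ^ 2) * (x1 - c2 * x2) * (c2 * x0 - x3) =
      (1 - c2 ^ 2) * (x3 - c1 * x2) * (c1 * x0 - x1) := by
    rw [div_eq_div_iff (mul_ne_zero h4 h8) (sub_ne_zero.2 hc2.symm)] at hhsr
    linear_combination hhsr
  rw [hsrL_mul_hsrL lam h3 h1, hsrL_mul_hsrL lam h23 h30]
  exact inv_smul_eq_inv_smul_of_smul_eq (mul_ne_zero h3 h1) (mul_ne_zero h23 h30)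
    (hsrLNum_zero_curvature lam hcross)

theorem hyperbolic_shifted_ratio_zero_curvature
    (x0 x1 x2 x3 c1 c2 lam : ℂ)
    (hc1 : c1 ^ 2 ≠ 1) (hc2 : c2 ^ 2 ≠ 1)
    (h1 : c1 * x0 - x1 ≠ 0) (h2 : x0 - c1 * x1 ≠ 0)
    (h3 : c2 * x1 - x2 ≠ 0) (h4 : x1 - c2 * x2 ≠ 0)
    (h5 : c1 * x2 - x3 ≠ 0) (h6 : x2 - c1 * x3 ≠ 0)
    (h7 : c2 * x3 - x0 ≠ 0) (h8 : x3 - c2 * x0 ≠ 0)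
    (hhsr : (c1 * x0 - x1) * (c1 * x2 - x3) /
        ((x1 - c2 * x2) * (x3 - c2 * x0)) = (1 - c1 ^ 2) / (1 - c2 ^ 2)) :
    hsrL x2 x1 c2 lam * hsrL x1 x0 c1 lam =
      hsrL x2 x3 c1 lam * hsrL x3 x0 c2 lam :=
  hyperbolic_shifted_ratio_zero_curvature_general x0 x1 x2 x3 c1 c2 lam hc2 h1 h3 h4 h6 h8 hhsr
end
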